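/- arXiv:1411.6416 — 4 statements merged into one kernel-verified Lean document; each statement's English description precedes it below -/
import Mathlib

section
/- Let E = EuclideanSpace ℝ (Fin n), let τ > 0 and m ≠ 0 be real numbers, and define f : E → ℝ by f(x) = m · log(τ + ‖x‖²). Then for every point x and all vectors v, w one has (fderiv ℝ (fderiv ℝ f) x v) w + (1/m) · (fderiv ℝ f x v) · (fderiv ℝ f x w) = (2m/(τ + ‖x‖²)) · ⟪v, w⟫. Consequently, since flat Euclidean space has vanishing Ricci curvature, (ℝⁿ, g₀, ∇u, m/u, λ) with u = e^{f/m} = τ + ‖x‖² and λ(x) = 2m/(τ + ‖x‖²) is a nontrivial gradient (m/u)-almost Ricci soliton. -/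
open RealInnerProductSpace

/-! For a positive C² function `u`, the Hessian of its logarithm is
`∇²(log u) = ∇²u / u - du ⊗ du / u²`. Hence `f = m log u` satisfies
`∇²f + (1/m) df ⊗ df = (m/u) ∇²u`, and for `u = τ + ‖x‖²` the Hessian of `u` is `2⟪·, ·⟫`. -/

open Filter Topology

section LogComp

variable {E : Type*} [NormedAddCommGroup E] [NormedSpace ℝ E] {u : E → ℝ} {x : E}

theorem fderiv_fderiv_log_comp_apply (hu : ContDiffAt ℝ 2 u x) (hx : u x ≠ 0) (v w : E) :
    fderiv ℝ (fderiv ℝ fun y => Real.log (u y)) x v w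
      = (u x)⁻¹ * fderiv ℝ (fderiv ℝ u) x v w
        - (u x ^ 2)⁻¹ * fderiv ℝ u x v * fderiv ℝ u x w := by
  have hderiv : fderiv ℝ (fun y => Real.log (u y)) =ᶠ[𝓝 x] fun y => (u y)⁻¹ • fderiv ℝ u y := by
    filter_upwards [hu.eventually (by simp), hu.continuousAt.eventually_ne hx] with y hy hy0
    exact fderiv.log (hy.differentiableAt (by simp)) hy0
  have hinv : HasFDerivAt (fun y => (u y)⁻¹) (-(u x ^ 2)⁻¹ • fderiv ℝ u x) x :=
    (hasDerivAt_inv hx).comp_hasFDerivAt x (hu.differentiableAt (by simp)).hasFDerivAt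
  have hdu : HasFDerivAt (fderiv ℝ u) (fderiv ℝ (fderiv ℝ u) x) x :=
    ((hu.fderiv_right (m := 1) le_rfl).differentiableAt one_ne_zero).hasFDerivAt
  rw [hderiv.fderiv_eq, (hinv.fun_smul hdu).fderiv]
  simp only [neg_smul, add_apply, smul_apply, ContinuousLinearMap.smulRight_apply, neg_apply,
    smul_eq_mul]
  ring

theorem fderiv_fderiv_mul_log_add_inv_mul_fderiv_mul_fderiv {m : ℝ} (hu : ContDiffAt ℝ 2 u x)
    (hx : u x ≠ 0) (hm : m ≠ 0) (v w : E) :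
    fderiv ℝ (fderiv ℝ fun y => m * Real.log (u y)) x v w
        + 1 / m * fderiv ℝ (fun y => m * Real.log (u y)) x v
          * fderiv ℝ (fun y => m * Real.log (u y)) x w
      = m / u x * fderiv ℝ (fderiv ℝ u) x v w := by
  have hderiv : fderiv ℝ (fun y => m * Real.log (u y)) = m • fderiv ℝ fun y => Real.log (u y) :=
    fderiv_const_smul_field m
  have hderiv2 : fderiv ℝ (m • fderiv ℝ fun y => Real.log (u y))
      = m • fderiv ℝ (fderiv ℝ fun y => Real.log (u y)) :=
    fderiv_const_smul_field (f := fderiv ℝ fun y => Real.log (u y)) m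
  simp only [hderiv, hderiv2, Pi.smul_apply, smul_apply, smul_eq_mul,
    fderiv_fderiv_log_comp_apply hu hx, fderiv.log (hu.differentiableAt (by simp)) hx]
  field_simp
  ring

end LogComp

theorem fderiv_fderiv_const_add_norm_sq_apply {F : Type*} [NormedAddCommGroup F]
    [InnerProductSpace ℝ F] (τ : ℝ) (x v w : F) :
    fderiv ℝ (fderiv ℝ fun y : F => τ + ‖y‖ ^ 2) x v w = 2 * ⟪v, w⟫ := by
  have hderiv : fderiv ℝ (fun y : F => τ + ‖y‖ ^ 2) = ⇑((2 : ℝ) • innerSL ℝ (E := F)) := by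
    ext y : 1
    rw [fderiv_const_add, fderiv_norm_sq_apply, FunLike.coe_smul, Pi.smul_apply]
    exact (two_smul ℕ _).trans (two_smul ℝ _).symm
  rw [hderiv, ContinuousLinearMap.fderiv, smul_apply, smul_apply, innerSL_apply_apply,
    smul_eq_mul]

theorem log_potential_soliton (n : ℕ) (τ m : ℝ) (hτ : 0 < τ) (hm : m ≠ 0)
    (f : EuclideanSpace ℝ (Fin n) → ℝ)
    (hf : ∀ x, f x = m * Real.log (τ + ‖x‖ ^ 2))
    (x v w : EuclideanSpace ℝ (Fin n)) :
    (fderiv ℝ (fderiv ℝ f) x v) w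
        + (1 / m) * (fderiv ℝ f x v) * (fderiv ℝ f x w)
      = (2 * m / (τ + ‖x‖ ^ 2)) * ⟪v, w⟫ := by
  obtain rfl : f = fun y => m * Real.log (τ + ‖y‖ ^ 2) := funext hf
  have hu : τ + ‖x‖ ^ 2 ≠ 0 := by positivity
  have hu_smooth : ContDiff ℝ 2 fun y : EuclideanSpace ℝ (Fin n) => τ + ‖y‖ ^ 2 :=
    contDiff_const.add (contDiff_norm_sq ℝ)
  rw [fderiv_fderiv_mul_log_add_inv_mul_fderiv_mul_fderiv hu_smooth.contDiffAt hu hm,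
    fderiv_fderiv_const_add_norm_sq_apply]
  ring
end

section
/- Let E = EuclideanSpace ℝ (Fin n) with standard orthonormal basis (b i), let T : E → (E →L[ℝ] E) be a differentiable field of continuous linear operators and φ : E → ℝ a differentiable function. Then for every point x and every vector v, ∑ i ⟪(fderiv ℝ (fun y => φ y • T y) x (b i)) v, b i⟫ = φ(x) · ∑ i ⟪(fderiv ℝ T x (b i)) v, b i⟫ + ⟪T x v, gradient φ x⟫. That is, div(φT) = φ·div T + T(∇φ, ·). -/
open RealInnerProductSpace

theorem fderiv_smul_apply_apply {𝕜 E F G : Type*} [NontriviallyNormedField 𝕜]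
    [NormedAddCommGroup E] [NormedSpace 𝕜 E] [NormedAddCommGroup F] [NormedSpace 𝕜 F]
    [NormedAddCommGroup G] [NormedSpace 𝕜 G] {φ : E → 𝕜} {T : E → F →L[𝕜] G} {x : E}
    (hφ : DifferentiableAt 𝕜 φ x) (hT : DifferentiableAt 𝕜 T x) (w : E) (v : F) :
    fderiv 𝕜 (fun y => φ y • T y) x w v = φ x • fderiv 𝕜 T x w v + fderiv 𝕜 φ x w • T x v := by
  rw [fderiv_fun_smul hφ hT]
  simp

section Divergence

variable {E : Type*} [NormedAddCommGroup E] [InnerProductSpace ℝ E] [CompleteSpace E]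
  {ι : Type*} [Fintype ι]

noncomputable def divergence (b : OrthonormalBasis ι ℝ E) (S : E → E →L[ℝ] E) (x v : E) : ℝ :=
  ∑ i, ⟪fderiv ℝ S x (b i) v, b i⟫

theorem OrthonormalBasis.sum_fderiv_mul_inner (b : OrthonormalBasis ι ℝ E) (φ : E → ℝ)
    (x u : E) : ∑ i, fderiv ℝ φ x (b i) * ⟪u, b i⟫ = ⟪u, gradient φ x⟫ := by
  simp_rw [← inner_gradient_left, mul_comm, real_inner_comm (b _) (gradient φ x)]
  exact b.sum_inner_mul_inner u (gradient φ x)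

theorem divergence_smul (b : OrthonormalBasis ι ℝ E) {φ : E → ℝ} {T : E → E →L[ℝ] E} {x : E}
    (hφ : DifferentiableAt ℝ φ x) (hT : DifferentiableAt ℝ T x) (v : E) :
    divergence b (fun y => φ y • T y) x v = φ x * divergence b T x v + ⟪T x v, gradient φ x⟫ := by
  simp_rw [divergence, fderiv_smul_apply_apply hφ hT, inner_add_left, real_inner_smul_left,
    Finset.sum_add_distrib, ← Finset.mul_sum, b.sum_fderiv_mul_inner]

end Divergence

theorem div_smul_tensor (n : ℕ)
    (T : EuclideanSpace ℝ (Fin n) → (EuclideanSpace ℝ (Fin n) →L[ℝ] EuclideanSpace ℝ (Fin n)))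
    (hT : Differentiable ℝ T)
    (φ : EuclideanSpace ℝ (Fin n) → ℝ) (hφ : Differentiable ℝ φ)
    (b : Fin n → EuclideanSpace ℝ (Fin n))
    (hb : b = fun i => EuclideanSpace.basisFun (Fin n) ℝ i)
    (x v : EuclideanSpace ℝ (Fin n)) :
    ∑ i, ⟪(fderiv ℝ (fun y => φ y • T y) x (b i)) v, b i⟫
      = φ x * ∑ i, ⟪(fderiv ℝ T x (b i)) v, b i⟫ + ⟪T x v, gradient φ x⟫ := by
  subst hb
  exact divergence_smul (EuclideanSpace.basisFun (Fin n) ℝ) (hφ x) (hT x) v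
end

section
/- Let E = EuclideanSpace ℝ (Fin n) with standard orthonormal basis (b i). Let T : E → (E →L[ℝ] E) be a differentiable field of operators with T x self-adjoint (⟪T x u, v⟫ = ⟪u, T x v⟫ for all u, v) at every point x, let Z : E → E be a differentiable vector field, and let φ : E → ℝ be differentiable. Then at every point x, ∑ i ⟪fderiv ℝ (fun y => φ y • (T y) (Z y)) x (b i), b i⟫ = φ(x) · ∑ i ⟪(fderiv ℝ T x (b i)) (Z x), b i⟫ + φ(x) · ∑ i ⟪T x (fderiv ℝ Z x (b i)), b i⟫ + ⟪T x (gradient φ x), Z x⟫. That is, div(T(φZ)) = φ·(div T)(Z) + φ·⟨∇Z, T⟩ + T(∇φ, Z). -/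
/-!
Expand the derivative of `y ↦ φ y • T y (Z y)` by the Leibniz rule and take the trace term by
term. The first two terms give `φ (div T)(Z)` and `φ ⟨∇Z, T⟩`. The third is the rank-one operator
`v ↦ dφ(v) • T(Z)`, whose trace is `dφ(T Z) = ⟪∇φ, T Z⟫ = ⟪T ∇φ, Z⟫` by the symmetry of `T`.
-/

open RealInnerProductSpace

theorem fderiv_smul_clm_apply_apply {𝕜 E F G : Type*} [NontriviallyNormedField 𝕜]
    [NormedAddCommGroup E] [NormedSpace 𝕜 E] [NormedAddCommGroup F] [NormedSpace 𝕜 F]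
    [NormedAddCommGroup G] [NormedSpace 𝕜 G]
    {φ : E → 𝕜} {T : E → F →L[𝕜] G} {Z : E → F} {x : E}
    (hφ : DifferentiableAt 𝕜 φ x) (hT : DifferentiableAt 𝕜 T x) (hZ : DifferentiableAt 𝕜 Z x)
    (v : E) :
    fderiv 𝕜 (fun y => φ y • T y (Z y)) x v
      = φ x • fderiv 𝕜 T x v (Z x) + φ x • T x (fderiv 𝕜 Z x v)
        + fderiv 𝕜 φ x v • T x (Z x) := by
  rw [fderiv_fun_smul hφ (hT.clm_apply hZ), fderiv_clm_apply hT hZ]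
  simp only [add_apply, smul_apply, ContinuousLinearMap.smulRight_apply,
    ContinuousLinearMap.comp_apply, ContinuousLinearMap.flip_apply, smul_add]
  abel

theorem OrthonormalBasis.sum_apply_mul_inner {ι E : Type*} [Fintype ι]
    [NormedAddCommGroup E] [InnerProductSpace ℝ E] (b : OrthonormalBasis ι ℝ E)
    (f : StrongDual ℝ E) (w : E) :
    ∑ i, f (b i) * ⟪w, b i⟫ = f w := by
  calc ∑ i, f (b i) * ⟪w, b i⟫
      = f (∑ i, ⟪b i, w⟫ • b i) := by
        simp only [map_sum, map_smul, smul_eq_mul, real_inner_comm, mul_comm]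
    _ = f w := by rw [b.sum_repr']

theorem div_T_phi_Z (n : ℕ)
    (T : EuclideanSpace ℝ (Fin n) → (EuclideanSpace ℝ (Fin n) →L[ℝ] EuclideanSpace ℝ (Fin n)))
    (hT : Differentiable ℝ T)
    (hTsym : ∀ x u v, ⟪T x u, v⟫ = ⟪u, T x v⟫)
    (Z : EuclideanSpace ℝ (Fin n) → EuclideanSpace ℝ (Fin n))
    (hZ : Differentiable ℝ Z)
    (φ : EuclideanSpace ℝ (Fin n) → ℝ) (hφ : Differentiable ℝ φ)
    (b : Fin n → EuclideanSpace ℝ (Fin n))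
    (hb : b = fun i => EuclideanSpace.basisFun (Fin n) ℝ i)
    (x : EuclideanSpace ℝ (Fin n)) :
    ∑ i, ⟪fderiv ℝ (fun y => φ y • (T y) (Z y)) x (b i), b i⟫
      = φ x * ∑ i, ⟪(fderiv ℝ T x (b i)) (Z x), b i⟫
        + φ x * ∑ i, ⟪T x (fderiv ℝ Z x (b i)), b i⟫
        + ⟪T x (gradient φ x), Z x⟫ := by
  have rank_one_trace :
      ∑ i, fderiv ℝ φ x (b i) * ⟪T x (Z x), b i⟫ = ⟪T x (gradient φ x), Z x⟫ := by
    subst hb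
    calc _ = fderiv ℝ φ x (T x (Z x)) :=
          (EuclideanSpace.basisFun (Fin n) ℝ).sum_apply_mul_inner _ _
      _ = _ := by rw [← inner_gradient_left, ← hTsym]
  simp only [fderiv_smul_clm_apply_apply (hφ x) (hT x) (hZ x), inner_add_left,
    real_inner_smul_left, Finset.sum_add_distrib, ← Finset.mul_sum]
  rw [rank_one_trace]
end

section
/- Let n ≥ 3, E = EuclideanSpace ℝ (Fin n) with standard orthonormal basis (b i), let m ≠ 0 be a real number, let u : E → ℝ be a smooth positive function and λ : E → ℝ a smooth function such that for every x and all vectors v, w one has (fderiv ℝ (fderiv ℝ u) x v) w = -((λ x) · (u x) / m) · ⟪v, w⟫ (the flat gradient (-m/u)-almost Ricci soliton equation Ric - (m/u)∇²u = λ g, with Ric = 0). Then for every x and every vector v, fderiv ℝ (fun y => ((n-2)/m)·(u y)²·(λ y) - (u y)·(Δu y) - (m-1)·‖gradient u y‖²) x v - ((m+n-2)/m)·(λ x)·(fderiv ℝ (fun y => (u y)²) x v) = 0, where Δu y = ∑ i (fderiv ℝ (fderiv ℝ u) y (b i)) (b i). -/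
open RealInnerProductSpace

theorem soliton_structural_identity (n : ℕ) (hn : 3 ≤ n) (m : ℝ) (hm : m ≠ 0)
    (u lam : EuclideanSpace ℝ (Fin n) → ℝ)
    (hu : ContDiff ℝ (⊤ : ℕ∞) u) (hupos : ∀ x, 0 < u x) (hlam : ContDiff ℝ (⊤ : ℕ∞) lam)
    (b : Fin n → EuclideanSpace ℝ (Fin n))
    (hb : b = fun i => EuclideanSpace.basisFun (Fin n) ℝ i)
    (hess : ∀ x v w, (fderiv ℝ (fderiv ℝ u) x v) w
      = -(lam x * u x / m) * ⟪v, w⟫)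
    (x v : EuclideanSpace ℝ (Fin n)) :
    fderiv ℝ (fun y => ((n - 2 : ℝ) / m) * (u y) ^ 2 * lam y
        - u y * (∑ i, (fderiv ℝ (fderiv ℝ u) y (b i)) (b i))
        - (m - 1) * ‖gradient u y‖ ^ 2) x v
      - ((m + n - 2) / m) * lam x * (fderiv ℝ (fun y => (u y) ^ 2) x v) = 0 := by
  have hud : Differentiable ℝ u := hu.differentiable (by simp)
  have hld : Differentiable ℝ lam := hlam.differentiable (by simp)
  have hfd2 : ContDiff ℝ 2 (fderiv ℝ u) := hu.fderiv_right (by norm_cast)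
  have hfdd : Differentiable ℝ (fderiv ℝ u) := hfd2.differentiable two_ne_zero
  have hfw2 : ∀ w : EuclideanSpace ℝ (Fin n),
      ContDiff ℝ 2 (fun y => fderiv ℝ u y w) :=
    fun w => (ContinuousLinearMap.apply ℝ ℝ w).contDiff.comp hfd2
  have hfwd : ∀ w, Differentiable ℝ (fun y => fderiv ℝ u y w) :=
    fun w => (hfw2 w).differentiable two_ne_zero
  -- Lemma A : derivative of the first derivatives
  have hA : ∀ (w z : EuclideanSpace ℝ (Fin n)),
      fderiv ℝ (fun y => fderiv ℝ u y w) z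
        = (-(lam z * u z / m)) • (innerSL ℝ w) := by
    intro w z
    rw [fderiv_clm_apply (hfdd z) (differentiableAt_const w)]
    ext q
    simp only [fderiv_fun_const, fderiv_const, Pi.zero_apply, ContinuousLinearMap.comp_zero, zero_add,
      ContinuousLinearMap.add_apply, ContinuousLinearMap.flip_apply,
      ContinuousLinearMap.smul_apply, innerSL_apply_apply, smul_eq_mul, hess,
      ContinuousLinearMap.zero_apply]
    rw [real_inner_comm]
  set c : EuclideanSpace ℝ (Fin n) → ℝ := fun y => -(lam y * u y / m) with hc
  have hcd : Differentiable ℝ c := by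
    rw [hc]; fun_prop
  -- symmetry of the third derivative
  have hB : ∀ (w z q : EuclideanSpace ℝ (Fin n)),
      fderiv ℝ c x z * ⟪w, q⟫ = fderiv ℝ c x q * ⟪w, z⟫ := by
    intro w z q
    have hsym : IsSymmSndFDerivAt ℝ (fun y => fderiv ℝ u y w) x :=
      (hfw2 w).contDiffAt.isSymmSndFDerivAt (by simp)
    have hfe : fderiv ℝ (fderiv ℝ (fun y => fderiv ℝ u y w)) x
        = (fderiv ℝ c x).smulRight (innerSL ℝ w) := by
      have h1 : (fderiv ℝ (fun y => fderiv ℝ u y w))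
          = fun y => c y • innerSL ℝ w := funext fun y => hA w y
      rw [h1, fderiv_smul_const (hcd x) (innerSL ℝ w)]
    have := hsym z q
    rw [hfe] at this
    simpa [smul_eq_mul] using this
  have hbi : ∀ (i : Fin n) (z : EuclideanSpace ℝ (Fin n)), ⟪b i, z⟫ = z i := by
    intro i z
    rw [hb]
    simp [EuclideanSpace.inner_single_left]
  have hbb : ∀ i : Fin n, (⟪b i, b i⟫ : ℝ) = 1 := by
    intro i
    rw [hbi, hb]
    simp [EuclideanSpace.single_apply]
  set i0 : Fin n := ⟨0, by omega⟩ with hi0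
  set i1 : Fin n := ⟨1, by omega⟩ with hi1
  have hne : i1 ≠ i0 := by simp [hi0, hi1, Fin.ext_iff]
  have hb01 : (b i0) i1 = 0 := by
    rw [hb]; simp [EuclideanSpace.single_apply, hne]
  have hb11 : (b i1) i1 = 1 := by
    rw [hb]; simp [EuclideanSpace.single_apply]
  have hb00 : (b i0) i0 = 1 := by
    rw [hb]; simp [EuclideanSpace.single_apply]
  have h10 : fderiv ℝ c x (b i0) = 0 := by
    have h := hB (b i1) (b i0) (b i1)
    rw [hbi, hbi, hb11, hb01] at h
    simpa using h
  have hdc : ∀ z, fderiv ℝ c x z = 0 := by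
    intro z
    have h := hB (b i0) z (b i0)
    rw [hbi, hbi, hb00, h10] at h
    simpa using h
  -- the key pointwise relation d(lam*u) = 0
  have hrel : lam x * fderiv ℝ u x v + u x * fderiv ℝ lam x v = 0 := by
    have h1 : c = fun y => (-(1/m)) * (lam y * u y) := by
      funext y; simp [hc]; ring
    have h2 : fderiv ℝ c x = (-(1/m)) • fderiv ℝ (fun y => lam y * u y) x := by
      rw [h1, fderiv_const_mul (a := fun y => lam y * u y) ((hld x).mul (hud x))]
    have h3 : fderiv ℝ (fun y => lam y * u y) x
        = lam x • fderiv ℝ u x + u x • fderiv ℝ lam x :=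
      fderiv_mul (hld x) (hud x)
    have h4 := hdc v
    rw [h2, h3] at h4
    simp only [ContinuousLinearMap.smul_apply, ContinuousLinearMap.add_apply,
      smul_eq_mul] at h4
    have hm' : (-(1/m)) ≠ 0 := by simp [hm]
    have := mul_eq_zero.mp h4
    rcases this with h | h
    · exact absurd h hm'
    · linarith
  -- gradient facts
  have hgrad : ∀ (y w : EuclideanSpace ℝ (Fin n)),
      fderiv ℝ u y w = ⟪gradient u y, w⟫ := by
    intro y w
    rw [← InnerProductSpace.toDual_apply_apply]
    unfold gradient
    rw [LinearIsometryEquiv.apply_symm_apply]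
  have hco : ∀ (y : EuclideanSpace ℝ (Fin n)) (i : Fin n),
      fderiv ℝ u y (b i) = gradient u y i := by
    intro y i
    rw [hgrad, real_inner_comm, hbi]
  have hnorm : ∀ y, ‖gradient u y‖^2
      = ∑ i, (fderiv ℝ u y (b i)) * (fderiv ℝ u y (b i)) := by
    intro y
    rw [← real_inner_self_eq_norm_sq]
    rw [PiLp.inner_apply]
    refine Finset.sum_congr rfl fun i _ => ?_
    rw [hco]
    simp [RCLike.inner_apply, pow_two]
  -- rewrite the big function
  have hmain : (fun y => ((n - 2 : ℝ) / m) * (u y) ^ 2 * lam y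
        - u y * (∑ i, (fderiv ℝ (fderiv ℝ u) y (b i)) (b i))
        - (m - 1) * ‖gradient u y‖ ^ 2)
      = fun y => ((2*(n:ℝ) - 2) / m) * ((u y) * (u y) * lam y)
        - (m - 1) * ∑ i, (fderiv ℝ u y (b i)) * (fderiv ℝ u y (b i)) := by
    funext y
    have h1 : ∑ i, (fderiv ℝ (fderiv ℝ u) y (b i)) (b i)
        = (n:ℝ) * (-(lam y * u y / m)) := by
      simp only [hess, hbb, mul_one]
      rw [Finset.sum_const, Finset.card_univ, Fintype.card_fin, nsmul_eq_mul]
    rw [h1, hnorm y, pow_two]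
    ring
  have hU : HasFDerivAt u (fderiv ℝ u x) x := (hud x).hasFDerivAt
  have hL : HasFDerivAt lam (fderiv ℝ lam x) x := (hld x).hasFDerivAt
  have hFi : ∀ i : Fin n, HasFDerivAt (fun y => fderiv ℝ u y (b i))
      ((-(lam x * u x / m)) • innerSL ℝ (b i)) x := by
    intro i
    rw [← hA (b i) x]
    exact (hfwd (b i) x).hasFDerivAt
  have hBig : HasFDerivAt (fun y => ((2*(n:ℝ) - 2) / m) * ((u y) * (u y) * lam y)
        - (m - 1) * ∑ i, (fderiv ℝ u y (b i)) * (fderiv ℝ u y (b i)))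
      ((((2*(n:ℝ) - 2) / m) • ((u x * u x) • fderiv ℝ lam x
          + lam x • (u x • fderiv ℝ u x + u x • fderiv ℝ u x)))
        - ((m - 1) • ∑ i : Fin n,
            ((fderiv ℝ u x (b i)) • ((-(lam x * u x / m)) • innerSL ℝ (b i))
              + (fderiv ℝ u x (b i)) • ((-(lam x * u x / m)) • innerSL ℝ (b i))))) x :=
    (((hU.mul hU).mul hL).const_mul _).sub
      ((HasFDerivAt.fun_sum (fun i _ => (hFi i).mul (hFi i))).const_mul _)
  have hsq : fderiv ℝ (fun y => (u y)^2) x v = 2 * u x * fderiv ℝ u x v := by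
    have h1 : (fun y => (u y)^2) = fun y => u y * u y := by
      funext y; rw [pow_two]
    rw [h1, (hU.fun_mul hU).fderiv]
    simp only [ContinuousLinearMap.add_apply, ContinuousLinearMap.smul_apply,
      smul_eq_mul]
    ring
  have hv : v = ∑ i, v i • b i := by
    rw [hb]
    exact ((EuclideanSpace.basisFun (Fin n) ℝ).sum_repr v).symm
  have hLv : ∀ (L : EuclideanSpace ℝ (Fin n) →L[ℝ] ℝ),
      L v = ∑ i, v i * L (b i) := by
    intro L
    conv_lhs => rw [hv]
    rw [map_sum]
    simp [smul_eq_mul]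
  rw [hmain, hBig.fderiv, hsq]
  simp only [ContinuousLinearMap.sub_apply, ContinuousLinearMap.smul_apply,
    ContinuousLinearMap.add_apply, ContinuousLinearMap.sum_apply,
    innerSL_apply_apply, smul_eq_mul]
  have hsum2 : ∑ i, (fderiv ℝ u x (b i) * (-(lam x * u x / m) * ⟪b i, v⟫)
        + fderiv ℝ u x (b i) * (-(lam x * u x / m) * ⟪b i, v⟫))
      = (-(2 * lam x * u x / m)) * (fderiv ℝ u x v) := by
    rw [hLv (fderiv ℝ u x), Finset.mul_sum]
    refine Finset.sum_congr rfl fun i _ => ?_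
    rw [hbi]
    ring
  rw [hsum2]
  have hux := (hupos x).ne'
  field_simp
  linear_combination (2*(n:ℝ) - 2) * u x * hrel
end
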